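/- arXiv:1103.5067 — 2 statements merged into one kernel-verified Lean document; each statement's English description precedes it below -/
import Mathlib

section
/- Let R be a difference ring (a commutative ring with an endomorphism σ) which is simple as a σ-ring (no nontrivial σ-stable ideals), finitely generated as an algebra over a difference field F whose constants K = F^σ are algebraically closed of characteristic zero. Then the ring of σ-constants of R equals K. -/
/-!
For a σ-constant `r` it suffices to find `c ∈ K` with `r - c` not a unit: `r - c` is a σ-constant,
and a nonzero σ-constant `x` is a unit because `(x)` is a σ-ideal.

If `r` is algebraic over `F`, its minimal polynomial is σ-invariant, so it has coefficients in `K`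
and hence a root `c ∈ K`; writing it as `(X - c) q`, we get `(r - c) q(r) = 0` with `q(r) ≠ 0` by
minimality, so `r - c` is not a unit.
If `r` is transcendental, Chevalley's theorem shows that the image of `Spec R → Spec F[X]` is
constructible; it contains the generic point, hence a dense open set, so `r - c` lies in a prime
of `R` for all but finitely many `c ∈ F`, and `K` is infinite.
-/

/-- The fixed subfield `F^σ` of an automorphism `σ` of a field `F`. -/
def fixedSubfield {F : Type*} [Field F] (σ : F ≃+* F) : Subfield F where
  carrier := {a | σ a = a}
  zero_mem' := by simp
  one_mem' := by simp
  add_mem' := by intro a b ha hb; simp only [Set.mem_setOf_eq, map_add] at *; rw [ha, hb]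
  mul_mem' := by intro a b ha hb; simp only [Set.mem_setOf_eq, map_mul] at *; rw [ha, hb]
  neg_mem' := by intro a ha; simp only [Set.mem_setOf_eq, map_neg] at *; rw [ha]
  inv_mem' := by intro a ha; simp only [Set.mem_setOf_eq, map_inv₀] at *; rw [ha]

open Polynomial PrimeSpectrum Topology

def IsDifferenceSimple {R : Type*} [CommRing R] (σ : R →+* R) : Prop :=
  ∀ I : Ideal R, (∀ x ∈ I, σ x ∈ I) → I = ⊥ ∨ I = ⊤

theorem IsDifferenceSimple.eq_zero_of_not_isUnit {R : Type*} [CommRing R] {σ : R →+* R}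
    (hσ : IsDifferenceSimple σ) {x : R} (hx : σ x = x) (hunit : ¬ IsUnit x) : x = 0 := by
  have hstable : ∀ y ∈ Ideal.span {x}, σ y ∈ Ideal.span {x} := by
    intro y hy
    obtain ⟨z, rfl⟩ := Ideal.mem_span_singleton'.mp hy
    exact Ideal.mem_span_singleton'.mpr ⟨σ z, by rw [map_mul, hx]⟩
  rcases hσ _ hstable with h | h
  · exact Ideal.span_singleton_eq_bot.mp h
  · exact absurd (Ideal.span_singleton_eq_top.mp h) hunit

section Minpoly

variable {F R : Type*} [Field F] [CommRing R] [Algebra F R]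

theorem aeval_map_of_comp_algebraMap {σF : F →+* F} {σR : R →+* R}
    (hcompat : ∀ a, σR (algebraMap F R a) = algebraMap F R (σF a)) (r : R) (p : F[X]) :
    aeval (σR r) (p.map σF) = σR (aeval r p) := by
  have h : (algebraMap F R).comp σF = σR.comp (algebraMap F R) :=
    RingHom.ext fun a => (hcompat a).symm
  rw [aeval_def, aeval_def, eval₂_map, h, hom_eval₂]

theorem minpoly_map_eq_self {σF : F →+* F} {σR : R →+* R}
    (hcompat : ∀ a, σR (algebraMap F R a) = algebraMap F R (σF a)) {r : R} (hr : σR r = r) :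
    (minpoly F r).map σF = minpoly F r := by
  by_cases hint : IsIntegral F r
  · refine eq_of_monic_of_dvd_of_natDegree_le (minpoly.monic hint)
      ((minpoly.monic hint).map σF) (minpoly.dvd F r ?_) natDegree_map_le
    rw [← hr, aeval_map_of_comp_algebraMap hcompat, hr, minpoly.aeval, map_zero]
  · rw [minpoly.eq_zero hint, Polynomial.map_zero]

theorem not_isUnit_sub_of_isRoot_minpoly {r : R} (hr : IsIntegral F r) {c : F}
    (hc : (minpoly F r).IsRoot c) : ¬ IsUnit (r - algebraMap F R c) := by
  intro hunit
  obtain ⟨q, hq⟩ := dvd_iff_isRoot.mpr hc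
  have hmonic : q.Monic := (monic_X_sub_C c).of_mul_monic_left (hq ▸ minpoly.monic hr)
  refine minpoly.aeval_ne_zero_of_dvdNotUnit_minpoly hr hmonic
    ⟨hmonic.ne_zero, X - C c, not_isUnit_X_sub_C c, by rw [hq, mul_comm]⟩ ?_
  have h := minpoly.aeval F r
  rw [hq, map_mul, map_sub, aeval_X, aeval_C] at h
  exact (hunit.mul_right_eq_zero).mp h

end Minpoly

theorem Subfield.exists_isRoot_mem_of_coeff_mem {F : Type*} [Field F] (K : Subfield F)
    [IsAlgClosed K] {p : F[X]} (hp : p.degree ≠ 0) (hcoeff : ∀ n, p.coeff n ∈ K) :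
    ∃ c ∈ K, p.IsRoot c := by
  obtain ⟨q, rfl⟩ := (mem_lifts (f := K.subtype) p).mp <|
    (lifts_iff_coeff_lifts (f := K.subtype) p).mpr fun n => ⟨⟨_, hcoeff n⟩, rfl⟩
  rw [degree_map_eq_of_injective K.subtype.injective] at hp
  obtain ⟨c, hc⟩ := IsAlgClosed.exists_root q hp
  exact ⟨c, c.2, hc.map⟩

theorem PrimeSpectrum.exists_basicOpen_subset_of_isConstructible {A : Type*} [CommRing A]
    [IsDomain A] {s : Set (PrimeSpectrum A)} (hs : IsConstructible s) (hbot : ⊥ ∈ s) :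
    ∃ g : A, g ≠ 0 ∧ (basicOpen g : Set (PrimeSpectrum A)) ⊆ s := by
  obtain ⟨S, rfl⟩ := exists_constructibleSetData_iff.mpr hs
  simp only [ConstructibleSetData.toSet, Set.mem_iUnion] at hbot
  obtain ⟨C, hCS, hbotC⟩ := hbot
  simp only [BasicConstructibleSetData.toSet, Set.mem_sdiff, mem_zeroLocus, Set.range_subset_iff,
    Set.singleton_subset_iff, asIdeal_bot, SetLike.mem_coe, Ideal.mem_bot] at hbotC
  refine ⟨C.f, hbotC.2, fun p hp => Set.mem_biUnion hCS ⟨?_, ?_⟩⟩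
  · rintro _ ⟨i, rfl⟩
    simp [hbotC.1 i]
  · simpa using hp

theorem finite_setOf_isUnit_sub_of_transcendental {F R : Type*} [Field F] [CommRing R]
    [Algebra F R] [Algebra.FiniteType F R] {r : R} (hr : Transcendental F r) :
    {c : F | IsUnit (r - algebraMap F R c)}.Finite := by
  let f : F[X] →+* R := (aeval r : F[X] →ₐ[F] R)
  have hfinj : Function.Injective f := transcendental_iff_injective.mp hr
  have hfp : f.FinitePresentation := by
    refine RingHom.FinitePresentation.of_finiteType.mp (RingHom.FiniteType.of_comp_finiteType
      (f := (C : F →+* F[X])) ?_)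
    rw [show f.comp C = algebraMap F R from RingHom.ext fun a => aeval_C r a]
    exact RingHom.finiteType_algebraMap.mpr inferInstance
  have hbot : ⊥ ∈ Set.range (comap f) := by
    obtain ⟨q, hq, hqbot⟩ := Ideal.exists_comap_eq_of_mem_minimalPrimes_of_injective hfinj ⊥
      (by rw [IsDomain.minimalPrimes_eq_singleton_bot]; rfl)
    exact ⟨⟨q, hq⟩, PrimeSpectrum.ext hqbot⟩
  obtain ⟨g, hg0, hg⟩ := exists_basicOpen_subset_of_isConstructible
    (isConstructible_range_comap hfp) hbot
  refine (finite_setOfPred_isRoot hg0).subset fun c hunit => ?_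
  by_contra hroot
  obtain ⟨q, hq⟩ := hg (a := ⟨RingHom.ker (evalRingHom c), RingHom.ker_isPrime _⟩) hroot
  have hmem : r - algebraMap F R c ∈ q.asIdeal := by
    have hXc : X - C c ∈ (comap f q).asIdeal := by
      rw [hq]
      simp
    simpa [f] using hXc
  exact q.isPrime.ne_top (Ideal.eq_top_of_isUnit_mem _ hmem hunit)

theorem exists_mem_fixedSubfield_isRoot_minpoly {F R : Type*} [Field F] [CommRing R]
    [Nontrivial R] [Algebra F R] {σF : F ≃+* F} [IsAlgClosed (fixedSubfield σF)]
    {σR : R →+* R} (hcompat : ∀ a, σR (algebraMap F R a) = algebraMap F R (σF a)) {r : R}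
    (hr : σR r = r) (hint : IsIntegral F r) :
    ∃ c ∈ fixedSubfield σF, (minpoly F r).IsRoot c := by
  refine Subfield.exists_isRoot_mem_of_coeff_mem _ (minpoly.degree_pos hint).ne' fun n => ?_
  show σF _ = _
  simpa using congrArg (coeff · n) (minpoly_map_eq_self (σF := (σF : F →+* F)) hcompat hr)

theorem constants_of_simple_difference_ring_general
    {F : Type*} [Field F] (σF : F ≃+* F)
    (R : Type*) [CommRing R] [Nontrivial R] [Algebra F R]
    (hFT : Algebra.FiniteType F R)
    (σR : R →+* R)
    (hcompat : ∀ a : F, σR (algebraMap F R a) = algebraMap F R (σF a))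
    (hsimple : ∀ I : Ideal R, (∀ x ∈ I, σR x ∈ I) → I = ⊥ ∨ I = ⊤)
    (hK : IsAlgClosed (fixedSubfield σF)) :
    ∀ r : R, σR r = r → ∃ a : F, σF a = a ∧ algebraMap F R a = r := by
  intro r hr
  obtain ⟨c, hcK, hc⟩ : ∃ c ∈ fixedSubfield σF, ¬ IsUnit (r - algebraMap F R c) := by
    by_cases hint : IsIntegral F r
    · obtain ⟨c, hcK, hroot⟩ := exists_mem_fixedSubfield_isRoot_minpoly hcompat hr hint
      exact ⟨c, hcK, not_isUnit_sub_of_isRoot_minpoly hint hroot⟩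
    · have hfin := finite_setOf_isUnit_sub_of_transcendental fun halg => hint halg.isIntegral
      exact ((Set.infinite_coe_iff.mp inferInstance).sdiff hfin).nonempty
  have hfix : σR (r - algebraMap F R c) = r - algebraMap F R c := by
    rw [map_sub, hr, hcompat, hcK]
  exact ⟨c, hcK, (sub_eq_zero.mp (IsDifferenceSimple.eq_zero_of_not_isUnit hsimple hfix hc)).symm⟩

/-- van der Put–Singer, Lemma 1.8: let `R` be a σ-simple
difference ring, finitely generated as an algebra over a difference field `F`
of characteristic zero whose constants `K = F^σ` are algebraically closed.
Then every σ-constant of `R` comes from `K`. -/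
theorem constants_of_simple_difference_ring
    {F : Type*} [Field F] [CharZero F] (σF : F ≃+* F)
    (R : Type*) [CommRing R] [Nontrivial R] [Algebra F R]
    (hFT : Algebra.FiniteType F R)
    (σR : R →+* R)
    (hcompat : ∀ a : F, σR (algebraMap F R a) = algebraMap F R (σF a))
    (hsimple : ∀ I : Ideal R, (∀ x ∈ I, σR x ∈ I) → I = ⊥ ∨ I = ⊤)
    (hK : IsAlgClosed (fixedSubfield σF)) :
    ∀ r : R, σR r = r → ∃ a : F, σF a = a ∧ algebraMap F R a = r :=
  constants_of_simple_difference_ring_general σF R hFT σR hcompat hsimple hK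
end

section
/- Let E be a field, x transcendental over E, and q ∈ E not a root of unity acting by σ(f(x)) = f(qx). Let α₁,…,α_s be nonzero elements of an algebraic closure of E lying in pairwise distinct q-orbits (qᶻαᵢ ∩ qᶻαⱼ = ∅ for i ≠ j), and let l₁,…,l_s be nonzero integers. Then there is no h ∈ E(x) such that Σᵢ lᵢ/(x − αᵢ) (or more generally a rational function whose partial-fraction decomposition has a pole of exact order m+1 at some αᵢ) equals h(qx) − h(x): the highest-order polar term at αᵢ would have to appear in h(qx) or in h(x), forcing a pole of h(qx) − h(x) at some qˢαᵢ with s ≠ 0 that cannot cancel, a contradiction. -/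
open Polynomial

namespace NoTelescopeAux

variable {K : Type*} [Field K]

/-- Order of vanishing of a rational function at a point `a`. -/
noncomputable def ord (a : K) (f : RatFunc K) : ℤ :=
  (rootMultiplicity a f.num : ℤ) - rootMultiplicity a f.denom

lemma ord_zero (a : K) : ord a (0 : RatFunc K) = 0 := by
  simp [ord]

lemma algebraMap_ne_zero {p : K[X]} (hp : p ≠ 0) :
    algebraMap K[X] (RatFunc K) p ≠ 0 := by
  simpa using (RatFunc.algebraMap_ne_zero hp)

lemma ord_div (a : K) {p r : K[X]} (hp : p ≠ 0) (hr : r ≠ 0) :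
    ord a (algebraMap K[X] (RatFunc K) p / algebraMap K[X] (RatFunc K) r)
      = (rootMultiplicity a p : ℤ) - rootMultiplicity a r := by
  set f := algebraMap K[X] (RatFunc K) p / algebraMap K[X] (RatFunc K) r with hfdef
  have hf : f ≠ 0 := div_ne_zero (algebraMap_ne_zero hp) (algebraMap_ne_zero hr)
  have hnum : f.num ≠ 0 := RatFunc.num_ne_zero hf
  have hden : f.denom ≠ 0 := RatFunc.denom_ne_zero f
  have hEq : algebraMap K[X] (RatFunc K) p / algebraMap K[X] (RatFunc K) r
      = algebraMap K[X] (RatFunc K) f.num / algebraMap K[X] (RatFunc K) f.denom := by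
    rw [RatFunc.num_div_denom]
  rw [div_eq_div_iff (algebraMap_ne_zero hr) (algebraMap_ne_zero hden)] at hEq
  rw [← map_mul, ← map_mul] at hEq
  have hpoly : p * f.denom = f.num * r := IsFractionRing.injective K[X] (RatFunc K) hEq
  have h1 : rootMultiplicity a (p * f.denom) = rootMultiplicity a p + rootMultiplicity a f.denom :=
    rootMultiplicity_mul (mul_ne_zero hp hden)
  have h2 : rootMultiplicity a (f.num * r) = rootMultiplicity a f.num + rootMultiplicity a r :=
    rootMultiplicity_mul (mul_ne_zero hnum hr)
  have h3 : rootMultiplicity a p + rootMultiplicity a f.denom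
      = rootMultiplicity a f.num + rootMultiplicity a r := by rw [← h1, ← h2, hpoly]
  unfold ord
  omega

lemma rootMultiplicity_neg (a : K) (p : K[X]) :
    rootMultiplicity a (-p) = rootMultiplicity a p := by
  by_cases hp : p = 0
  · simp [hp]
  · have h : -p = C (-1) * p := by simp
    rw [h, rootMultiplicity_mul (by simpa using hp), rootMultiplicity_C, zero_add]

lemma ord_neg (a : K) (f : RatFunc K) : ord a (-f) = ord a f := by
  by_cases hf : f = 0
  · simp [hf]
  · have h1 : -f = algebraMap K[X] (RatFunc K) (-f.num) / algebraMap K[X] (RatFunc K) f.denom := by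
      rw [map_neg, neg_div, RatFunc.num_div_denom]
    rw [h1, ord_div a (neg_ne_zero.mpr (RatFunc.num_ne_zero hf)) (RatFunc.denom_ne_zero f),
      rootMultiplicity_neg]
    rfl

lemma add_eq_div (f g : RatFunc K) :
    f + g = algebraMap K[X] (RatFunc K) (f.num * g.denom + g.num * f.denom)
      / algebraMap K[X] (RatFunc K) (f.denom * g.denom) := by
  conv_lhs => rw [← RatFunc.num_div_denom f, ← RatFunc.num_div_denom g]
  rw [div_add_div _ _ (algebraMap_ne_zero (RatFunc.denom_ne_zero f))
    (algebraMap_ne_zero (RatFunc.denom_ne_zero g)), map_add, map_mul, map_mul, map_mul]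
  ring

lemma ord_add_min (a : K) {f g : RatFunc K} (hf : f ≠ 0) (hg : g ≠ 0) (hfg : f + g ≠ 0) :
    min (ord a f) (ord a g) ≤ ord a (f + g) := by
  have hN : f.num * g.denom + g.num * f.denom ≠ 0 := by
    intro h0
    apply hfg
    rw [add_eq_div f g, h0, map_zero, zero_div]
  have hD : f.denom * g.denom ≠ 0 :=
    mul_ne_zero (RatFunc.denom_ne_zero f) (RatFunc.denom_ne_zero g)
  have key := rootMultiplicity_add (p := f.num * g.denom) (q := g.num * f.denom) a hN
  rw [rootMultiplicity_mul (mul_ne_zero (RatFunc.num_ne_zero hf) (RatFunc.denom_ne_zero g)),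
      rootMultiplicity_mul (mul_ne_zero (RatFunc.num_ne_zero hg) (RatFunc.denom_ne_zero f))] at key
  rw [add_eq_div f g, ord_div a hN hD, rootMultiplicity_mul hD]
  have e1 : ord a f = (rootMultiplicity a f.num : ℤ) - rootMultiplicity a f.denom := rfl
  have e2 : ord a g = (rootMultiplicity a g.num : ℤ) - rootMultiplicity a g.denom := rfl
  rw [e1, e2]
  push_cast at key ⊢
  omega

lemma ord_add_eq_left (a : K) {f g : RatFunc K} (hf : f ≠ 0)
    (hlt : ord a f < ord a g) : ord a (f + g) = ord a f := by
  by_cases hg : g = 0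
  · rw [hg, add_zero]
  have hfg : f + g ≠ 0 := by
    intro h0
    have hgf : g = -f := by linear_combination h0
    rw [hgf, ord_neg] at hlt
    exact lt_irrefl _ hlt
  have h1 := ord_add_min a hf hg hfg
  have h2 : min (ord a (f + g)) (ord a (-g)) ≤ ord a f := by
    have := ord_add_min a hfg (neg_ne_zero.mpr hg) (by simpa using hf)
    simpa using this
  rw [ord_neg] at h2
  omega

lemma ord_add_nonneg (a : K) {f g : RatFunc K} (hf : 0 ≤ ord a f) (hg : 0 ≤ ord a g) :
    0 ≤ ord a (f + g) := by
  by_cases h0 : f = 0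
  · simpa [h0] using hg
  by_cases h1 : g = 0
  · simpa [h1] using hf
  by_cases h2 : f + g = 0
  · rw [h2, ord_zero]
  have := ord_add_min a h0 h1 h2
  omega


lemma comp_CqX_ne_zero {q : K} (hq : q ≠ 0) {p : K[X]} (hp : p ≠ 0) :
    p.comp (C q * X) ≠ 0 := by
  intro h0
  apply hp
  have h1 : (p.comp (C q * X)).comp (C q⁻¹ * X) = p := by
    rw [comp_assoc, mul_comp, C_comp, X_comp]
    rw [show (C q : K[X]) * (C q⁻¹ * X) = X by
      rw [← mul_assoc, ← C_mul, mul_inv_cancel₀ hq, C_1, one_mul]]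
    exact comp_X
  rw [h0, zero_comp] at h1
  exact h1.symm

lemma XsubC_comp (q a : K) : (X - C (q * a)).comp (C q * X) = C q * (X - C a) := by
  rw [sub_comp, X_comp, C_comp, C_mul]
  ring

lemma dvd_comp_iff {q : K} (hq : q ≠ 0) (p : K[X]) (a : K) (k : ℕ) :
    (X - C a) ^ k ∣ p.comp (C q * X) ↔ (X - C (q * a)) ^ k ∣ p := by
  constructor
  · rintro ⟨c, hc⟩
    have h1 : (p.comp (C q * X)).comp (C q⁻¹ * X) = p := by
      rw [comp_assoc, mul_comp, C_comp, X_comp]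
      rw [show (C q : K[X]) * (C q⁻¹ * X) = X by
        rw [← mul_assoc, ← C_mul, mul_inv_cancel₀ hq, C_1, one_mul]]
      exact comp_X
    have h2 : p = ((X - C a) ^ k * c).comp (C q⁻¹ * X) := by rw [← hc, h1]
    rw [mul_comp, pow_comp, sub_comp, X_comp, C_comp] at h2
    have h3 : (C q⁻¹ : K[X]) * X - C a = C q⁻¹ * (X - C (q * a)) := by
      rw [C_mul, mul_sub, ← mul_assoc, ← C_mul, inv_mul_cancel₀ hq, C_1, one_mul]
    rw [h3, mul_pow] at h2
    exact ⟨C q⁻¹ ^ k * c.comp (C q⁻¹ * X), by rw [h2]; ring⟩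
  · rintro ⟨c, hc⟩
    have h2 : p.comp (C q * X) = ((X - C (q * a)) ^ k * c).comp (C q * X) := by rw [← hc]
    rw [mul_comp, pow_comp, XsubC_comp] at h2
    rw [mul_pow] at h2
    exact ⟨C q ^ k * c.comp (C q * X), by rw [h2]; ring⟩

lemma rootMultiplicity_comp_CqX {q : K} (hq : q ≠ 0) {p : K[X]} (hp : p ≠ 0) (a : K) :
    rootMultiplicity a (p.comp (C q * X)) = rootMultiplicity (q * a) p := by
  have hc := comp_CqX_ne_zero hq hp
  apply le_antisymm
  · rw [le_rootMultiplicity_iff hp]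
    exact (dvd_comp_iff hq p a _).mp (pow_rootMultiplicity_dvd _ a)
  · rw [le_rootMultiplicity_iff hc]
    exact (dvd_comp_iff hq p a _).mpr (pow_rootMultiplicity_dvd _ (q * a))

lemma sigma_algebraMap {q : K} (σ : RatFunc K ≃ₐ[K] RatFunc K)
    (hσ : σ RatFunc.X = RatFunc.C q * RatFunc.X) (p : K[X]) :
    σ (algebraMap K[X] (RatFunc K) p)
      = algebraMap K[X] (RatFunc K) (p.comp (C q * X)) := by
  let A1 : K[X] →ₐ[K] RatFunc K :=
    (σ : RatFunc K →ₐ[K] RatFunc K).comp (IsScalarTower.toAlgHom K K[X] (RatFunc K))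
  let A2 : K[X] →ₐ[K] RatFunc K :=
    (IsScalarTower.toAlgHom K K[X] (RatFunc K)).comp (aeval (C q * X))
  have hext : A1 = A2 := by
    apply Polynomial.algHom_ext
    show σ (algebraMap K[X] (RatFunc K) X) = algebraMap K[X] (RatFunc K) (aeval (C q * X) X)
    rw [aeval_X, RatFunc.algebraMap_X, hσ, map_mul, RatFunc.algebraMap_C, RatFunc.algebraMap_X]
  have := congrArg (fun A : K[X] →ₐ[K] RatFunc K => A p) hext
  simpa [A1, A2, comp_eq_aeval] using this

lemma ord_sigma {q : K} (hq : q ≠ 0) (σ : RatFunc K ≃ₐ[K] RatFunc K)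
    (hσ : σ RatFunc.X = RatFunc.C q * RatFunc.X) (f : RatFunc K) (a : K) :
    ord a (σ f) = ord (q * a) f := by
  by_cases hf : f = 0
  · rw [hf, map_zero, ord_zero, ord_zero]
  have hnum : f.num ≠ 0 := RatFunc.num_ne_zero hf
  have hden : f.denom ≠ 0 := RatFunc.denom_ne_zero f
  have h1 : σ f = algebraMap K[X] (RatFunc K) (f.num.comp (C q * X))
      / algebraMap K[X] (RatFunc K) (f.denom.comp (C q * X)) := by
    conv_lhs => rw [← RatFunc.num_div_denom f]
    rw [map_div₀, sigma_algebraMap σ hσ, sigma_algebraMap σ hσ]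
  rw [h1, ord_div a (comp_CqX_ne_zero hq hnum) (comp_CqX_ne_zero hq hden),
    rootMultiplicity_comp_CqX hq hnum, rootMultiplicity_comp_CqX hq hden]
  rfl


lemma denom_isRoot_of_ord_neg (a : K) (f : RatFunc K) (hlt : ord a f < 0) :
    f.denom.IsRoot a := by
  have h1 : (rootMultiplicity a f.num : ℤ) - rootMultiplicity a f.denom < 0 := hlt
  have h2 : 0 < rootMultiplicity a f.denom := by omega
  exact (rootMultiplicity_pos (RatFunc.denom_ne_zero f)).mp h2

end NoTelescopeAux

open NoTelescopeAux in
/-- key non-existence argument in Theorem 2.7: let `K` be a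
field of characteristic zero, `q ∈ K` nonzero and not a root of unity, and
`σ` the automorphism of `K(x)` with `σ(x) = qx`.  If `α₁,…,α_s` (`s ≥ 1`) are
nonzero elements lying in pairwise distinct `q`-orbits and `l₁,…,l_s` are
nonzero integers, then there is no `h ∈ K(x)` with
`Σᵢ lᵢ/(x − αᵢ) = h(qx) − h(x)`. -/
theorem no_telescoper_for_simple_poles
    {K : Type*} [Field K] [CharZero K] (q : K) (hq0 : q ≠ 0)
    (hq : ∀ m : ℕ, 0 < m → q ^ m ≠ 1)
    (σ : RatFunc K ≃ₐ[K] RatFunc K)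
    (hσ : σ RatFunc.X = RatFunc.C q * RatFunc.X)
    (s : ℕ) (hs : 0 < s) (α : Fin s → K) (hα0 : ∀ i, α i ≠ 0)
    (horb : ∀ i j : Fin s, i ≠ j → ∀ n : ℤ, q ^ n * α i ≠ α j)
    (l : Fin s → ℤ) (hl : ∀ i, l i ≠ 0) :
    ¬ ∃ h : RatFunc K,
        (∑ i, RatFunc.C ((l i : K)) / (RatFunc.X - RatFunc.C (α i))) =
          σ h - h := by
  classical
  rintro ⟨h, hh⟩
  set i0 : Fin s := ⟨0, hs⟩ with hi0
  set t : Fin s → RatFunc K :=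
    fun i => RatFunc.C ((l i : K)) / (RatFunc.X - RatFunc.C (α i)) with ht
  set F : RatFunc K := ∑ i, t i with hF
  -- rewrite each term as a quotient of polynomials
  have htq : ∀ i, t i = algebraMap K[X] (RatFunc K) (Polynomial.C ((l i : K)))
      / algebraMap K[X] (RatFunc K) (Polynomial.X - Polynomial.C (α i)) := by
    intro i
    rw [ht, map_sub, RatFunc.algebraMap_C, RatFunc.algebraMap_C, RatFunc.algebraMap_X]
  have hli : ∀ i, ((l i : K)) ≠ 0 := fun i => Int.cast_ne_zero.mpr (hl i)
  have htne : ∀ i, t i ≠ 0 := by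
    intro i
    rw [htq i]
    exact div_ne_zero (algebraMap_ne_zero (by simpa using hli i))
      (algebraMap_ne_zero (X_sub_C_ne_zero (α i)))
  have hterm : ∀ i (a : K), ord a (t i) = if a = α i then -1 else 0 := by
    intro i a
    rw [htq i, ord_div a (by simpa using hli i) (X_sub_C_ne_zero (α i)),
      rootMultiplicity_C]
    by_cases hae : a = α i
    · subst hae
      rw [rootMultiplicity_X_sub_C_self, if_pos rfl]
      norm_num
    · rw [rootMultiplicity_eq_zero (by simp [IsRoot, sub_eq_zero, hae]), if_neg hae]
      norm_num
  -- ord of F at points avoiding all the α i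
  have ordF_nonneg : ∀ a : K, (∀ i, a ≠ α i) → 0 ≤ ord a F := by
    intro a ha
    rw [hF]
    refine Finset.sum_induction t (fun f => 0 ≤ ord a f)
      (fun f g hf hg => ord_add_nonneg a hf hg) (le_of_eq (ord_zero a).symm) ?_
    intro i _
    rw [hterm i a, if_neg (ha i)]
  -- ord of F at α i0 is -1
  have ordF_i0 : ord (α i0) F = -1 := by
    have hsplit : F = t i0 + ∑ i ∈ Finset.univ.erase i0, t i := by
      rw [hF, Finset.add_sum_erase _ t (Finset.mem_univ i0)]
    have hrest : 0 ≤ ord (α i0) (∑ i ∈ Finset.univ.erase i0, t i) := by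
      refine Finset.sum_induction t (fun f => 0 ≤ ord (α i0) f)
        (fun f g hf hg => ord_add_nonneg _ hf hg) (le_of_eq (ord_zero _).symm) ?_
      intro i hi
      have hii0 : i ≠ i0 := Finset.ne_of_mem_erase hi
      have : α i ≠ α i0 := by
        have := horb i i0 hii0 0
        simpa using this
      rw [hterm i (α i0), if_neg (Ne.symm this)]
    have e0 : ord (α i0) (t i0) = -1 := by rw [hterm i0 (α i0), if_pos rfl]
    rw [hsplit, ord_add_eq_left (α i0) (htne i0) (by rw [e0]; omega), e0]
  -- q is not a root of unity (integer powers)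
  have hqz : ∀ n : ℤ, q ^ n = 1 → n = 0 := by
    intro n h1
    by_contra hn
    rcases lt_or_gt_of_ne hn with hneg | hpos
    · have h2 : q ^ (-n) = 1 := by rw [zpow_neg, h1, inv_one]
      have h3 : ((-n).toNat : ℤ) = -n := Int.toNat_of_nonneg (by omega)
      have h4 : q ^ ((-n).toNat) = 1 := by
        rw [← zpow_natCast, h3, h2]
      exact hq (-n).toNat (by omega) h4
    · have h3 : (n.toNat : ℤ) = n := Int.toNat_of_nonneg (by omega)
      have h4 : q ^ (n.toNat) = 1 := by rw [← zpow_natCast, h3, h1]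
      exact hq n.toNat (by omega) h4
  -- the orbit of α i0
  set β : ℤ → K := fun n => q ^ n * α i0 with hβ
  have hβinj : Function.Injective β := by
    intro n m hnm
    have h1 : q ^ n = q ^ m := mul_right_cancel₀ (hα0 i0) hnm
    have h2 : q ^ (n - m) = 1 := by
      rw [zpow_sub₀ hq0, h1, div_self (zpow_ne_zero m hq0)]
    have := hqz _ h2
    omega
  have hβnot : ∀ n : ℤ, n ≠ 0 → ∀ i, β n ≠ α i := by
    intro n hn i heq
    by_cases hi : i = i0
    · rw [hi] at heq
      have h1 : q ^ n * α i0 = 1 * α i0 := by rw [one_mul]; exact heq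
      have h2 : q ^ n = 1 := mul_right_cancel₀ (hα0 i0) h1
      exact hn (hqz n h2)
    · exact horb i0 i (fun hc => hi hc.symm) n heq
  have hFβ : ∀ n : ℤ, n ≠ 0 → 0 ≤ ord (β n) F := fun n hn => ordF_nonneg _ (hβnot n hn)
  -- h is nonzero
  have hne : h ≠ 0 := by
    intro h0
    rw [h0, map_zero, sub_zero] at hh
    rw [hh] at ordF_i0
    rw [ord_zero] at ordF_i0
    omega
  have hσne : σ h ≠ 0 := fun hz => hne (by
    have := σ.injective (hz.trans (map_zero σ).symm)
    exact this)
  set g : ℤ → ℤ := fun n => ord (β n) h with hg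
  have hβsucc : ∀ n : ℤ, q * β n = β (n + 1) := by
    intro n
    show q * (q ^ n * α i0) = q ^ (n + 1) * α i0
    rw [zpow_add_one₀ hq0]
    ring
  have hσord : ∀ n : ℤ, ord (β n) (σ h) = g (n + 1) := by
    intro n
    rw [ord_sigma hq0 σ hσ, hβsucc n]
  -- key: a pole of σh - h on the orbit at index n with g n < 0 ≤ g (n+1) forces n = 0
  have key1 : ∀ n : ℤ, g n < 0 → 0 ≤ g (n + 1) → n = 0 := by
    intro n hgn hgn1
    have e1 : ord (β n) (σ h - h) = g n := by
      rw [sub_eq_add_neg, add_comm]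
      rw [ord_add_eq_left (β n) (neg_ne_zero.mpr hne)
        (by rw [ord_neg, hσord n]; exact lt_of_lt_of_le hgn hgn1), ord_neg]
    by_contra hn
    have := hFβ n hn
    rw [hh, e1] at this
    omega
  have key2 : ∀ n : ℤ, g (n + 1) < 0 → 0 ≤ g n → n = 0 := by
    intro n hgn1 hgn
    have e1 : ord (β n) (σ h - h) = g (n + 1) := by
      rw [sub_eq_add_neg]
      rw [ord_add_eq_left (β n) hσne
        (by rw [ord_neg, hσord n]; exact lt_of_lt_of_le hgn1 hgn), hσord n]
    by_contra hn
    have := hFβ n hn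
    rw [hh, e1] at this
    omega
  -- the set of poles of h on the orbit is finite
  have hSfin : {n : ℤ | g n < 0}.Finite := by
    apply Set.Finite.subset
      (Set.Finite.preimage hβinj.injOn (finite_setOf_isRoot (RatFunc.denom_ne_zero h)))
    intro n hn
    exact denom_isRoot_of_ord_neg (β n) h hn
  by_cases hS : {n : ℤ | g n < 0}.Nonempty
  · -- there is a pole on the orbit
    have hSfne : hSfin.toFinset.Nonempty := hSfin.toFinset_nonempty.mpr hS
    have hmax := hSfin.toFinset.max'_mem hSfne
    have hmin := hSfin.toFinset.min'_mem hSfne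
    rw [Set.Finite.mem_toFinset] at hmax hmin
    set n0 := hSfin.toFinset.max' hSfne with hn0
    set n1 := hSfin.toFinset.min' hSfne with hn1
    have hmemn0 : g n0 < 0 := hmax
    have hmemn1 : g n1 < 0 := hmin
    have hn0succ : 0 ≤ g (n0 + 1) := by
      by_contra hc
      have hmem : n0 + 1 ∈ hSfin.toFinset :=
        (Set.Finite.mem_toFinset hSfin).mpr (lt_of_not_ge hc)
      have := hSfin.toFinset.le_max' _ hmem
      omega
    have hn1pred : 0 ≤ g (n1 - 1) := by
      by_contra hc
      have hmem : n1 - 1 ∈ hSfin.toFinset :=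
        (Set.Finite.mem_toFinset hSfin).mpr (lt_of_not_ge hc)
      have := hSfin.toFinset.min'_le _ hmem
      omega
    have hn0eq : n0 = 0 := key1 n0 hmemn0 hn0succ
    have hn1eq : n1 - 1 = 0 := by
      apply key2 (n1 - 1)
      · rw [sub_add_cancel]
        exact hmemn1
      · exact hn1pred
    have hle : n1 ≤ n0 := hSfin.toFinset.min'_le _ (hSfin.toFinset.max'_mem hSfne)
    omega
  · -- no pole of h on the orbit at all: contradiction with the pole of F at α i0
    rw [Set.not_nonempty_iff_eq_empty] at hS
    have hg0 : 0 ≤ g 0 := by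
      by_contra hc
      exact absurd (Set.eq_empty_iff_forall_notMem.mp hS 0) (by simpa using lt_of_not_ge hc)
    have hg1 : 0 ≤ g 1 := by
      by_contra hc
      exact absurd (Set.eq_empty_iff_forall_notMem.mp hS 1) (by simpa using lt_of_not_ge hc)
    have hβ0 : β 0 = α i0 := by rw [hβ]; simp
    have : 0 ≤ ord (α i0) (σ h - h) := by
      rw [← hβ0, sub_eq_add_neg]
      apply ord_add_nonneg
      · rw [hσord 0]
        exact hg1
      · rw [ord_neg]
        exact hg0
    rw [← hh, ordF_i0] at this
    omega
end
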